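/- Let μ and ν be probability measures on ℝ with finite second moments, with cumulative distribution functions F and G and quantile functions F⁻¹ and G⁻¹. Then the 2-Wasserstein distance satisfies W₂(μ,ν)² = ∫_0^1 (F⁻¹(r) − G⁻¹(r))² dr. -/

import Mathlib

open MeasureTheory Set ProbabilityTheory Filter
open scoped ENNReal Topology

/-!
Say that `(x, y)` straddles `(s, t)` if one of `x, y` is `≤ s` and the other is `> t`. For fixed
`(x, y)` the pairs `s < t` it straddles form a triangle of area `(x - y)² / 2`, so by Tonelli the
cost of a coupling `γ` is `2 ∫_{s < t} γ(straddle(s, t))`. For `s ≤ t` the marginals force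
`γ(straddle(s, t)) ≥ (G(s) - F(t))⁺ + (F(s) - G(t))⁺`, and the quantile coupling
`r ↦ (F⁻¹(r), G⁻¹(r))` with `r` uniform on `(0, 1)` attains this bound, since
`F⁻¹(r) ≤ x ↔ r ≤ F(x)`. So the quantile coupling is optimal, and its cost is the right-hand side.
-/

namespace QuantileCoupling

noncomputable def quantile (μ : Measure ℝ) (r : ℝ) : ℝ := sInf {x | r ≤ cdf μ x}

section Quantile

variable (μ : Measure ℝ) {r : ℝ}

lemma nonempty_setOf_le_cdf (hr : r < 1) : {x | r ≤ cdf μ x}.Nonempty :=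
  ((tendsto_cdf_atTop μ).eventually (eventually_ge_nhds hr)).exists

lemma bddBelow_setOf_le_cdf (hr : 0 < r) : BddBelow {x | r ≤ cdf μ x} := by
  obtain ⟨x₀, hx₀⟩ :=
    eventually_atBot.mp ((tendsto_cdf_atBot μ).eventually (eventually_lt_nhds hr))
  exact ⟨x₀, fun x hx => le_of_not_gt fun hlt => (hx.trans_lt (hx₀ x hlt.le)).false⟩

lemma quantile_le_iff (hr : r ∈ Ioo 0 1) (x : ℝ) : quantile μ r ≤ x ↔ r ≤ cdf μ x := by
  have hbdd := bddBelow_setOf_le_cdf μ hr.1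
  refine ⟨fun h => ?_, fun h => csInf_le hbdd h⟩
  -- right-continuity of the cdf puts the infimum itself in the set
  have habove : ∀ᶠ y in 𝓝[>] quantile μ r, r ≤ cdf μ y := by
    filter_upwards [self_mem_nhdsWithin] with y hy
    obtain ⟨z, hz, hzy⟩ := (csInf_lt_iff hbdd (nonempty_setOf_le_cdf μ hr.2)).mp hy
    exact hz.trans (monotone_cdf μ hzy.le)
  have hright : Tendsto (cdf μ) (𝓝[>] quantile μ r) (𝓝 (cdf μ (quantile μ r))) :=
    ((cdf μ).right_continuous _).mono_left (nhdsWithin_mono _ Ioi_subset_Ici_self)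
  exact (ge_of_tendsto hright habove).trans (monotone_cdf μ h)

lemma monotoneOn_quantile : MonotoneOn (quantile μ) (Ioo 0 1) := fun _ hr _ hr' hrr' =>
  csInf_le_csInf (bddBelow_setOf_le_cdf μ hr.1) (nonempty_setOf_le_cdf μ hr'.2)
    fun _ hx => hrr'.trans hx

lemma aemeasurable_quantile : AEMeasurable (quantile μ) (volume.restrict (Ioo 0 1)) :=
  aemeasurable_restrict_of_monotoneOn measurableSet_Ioo (monotoneOn_quantile μ)

end Quantile

instance isProbabilityMeasure_volume_restrict_Ioo :
    IsProbabilityMeasure (volume.restrict (Ioo (0 : ℝ) 1)) :=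
  ⟨by simp⟩

lemma volume_restrict_Ioo_Ioc {a b : ℝ} (ha : 0 ≤ a) (hb : b ≤ 1) :
    volume.restrict (Ioo 0 1) (Ioc a b) = ENNReal.ofReal (b - a) := by
  rw [Measure.restrict_congr_set Ioo_ae_eq_Icc,
    Measure.restrict_eq_self _ (Ioc_subset_Icc_self.trans (Icc_subset_Icc ha hb)),
    Real.volume_Ioc]

lemma map_quantile (μ : Measure ℝ) [IsProbabilityMeasure μ] :
    (volume.restrict (Ioo 0 1)).map (quantile μ) = μ := by
  have := Measure.isProbabilityMeasure_map (aemeasurable_quantile μ)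
  refine Measure.ext_of_Iic _ _ fun x => ?_
  have hae : quantile μ ⁻¹' Iic x =ᵐ[volume.restrict (Ioo 0 1)] Ioc 0 (cdf μ x) := by
    filter_upwards [ae_restrict_mem measurableSet_Ioo] with r hr
    change (quantile μ r ≤ x) = (0 < r ∧ r ≤ cdf μ x)
    rw [quantile_le_iff μ hr, eq_iff_iff, and_iff_right hr.1]
  rw [Measure.map_apply_of_aemeasurable (aemeasurable_quantile μ) measurableSet_Iic,
    measure_congr hae, volume_restrict_Ioo_Ioc le_rfl (cdf_le_one μ x), sub_zero, ofReal_cdf]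

lemma volume_restrict_Ioo_quantile_le_and_not_le (μ ν : Measure ℝ) [IsProbabilityMeasure μ]
    [IsProbabilityMeasure ν] (s t : ℝ) :
    volume.restrict (Ioo 0 1) {r | quantile ν r ≤ s ∧ ¬quantile μ r ≤ t} =
      ν (Iic s) - μ (Iic t) := by
  have hae : {r | quantile ν r ≤ s ∧ ¬quantile μ r ≤ t}
      =ᵐ[volume.restrict (Ioo 0 1)] Ioc (cdf μ t) (cdf ν s) := by
    filter_upwards [ae_restrict_mem measurableSet_Ioo] with r hr
    change (quantile ν r ≤ s ∧ ¬quantile μ r ≤ t) = (cdf μ t < r ∧ r ≤ cdf ν s)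
    rw [quantile_le_iff μ hr, quantile_le_iff ν hr, not_le, and_comm]
  rw [measure_congr hae, volume_restrict_Ioo_Ioc (cdf_nonneg μ t) (cdf_le_one ν s),
    ENNReal.ofReal_sub _ (cdf_nonneg μ t), ofReal_cdf, ofReal_cdf]

noncomputable def quantileCoupling (μ ν : Measure ℝ) : Measure (ℝ × ℝ) :=
  (volume.restrict (Ioo 0 1)).map fun r => (quantile μ r, quantile ν r)

section QuantileCoupling

variable (μ ν : Measure ℝ)

lemma aemeasurable_quantile_prod :
    AEMeasurable (fun r => (quantile μ r, quantile ν r)) (volume.restrict (Ioo 0 1)) :=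
  (aemeasurable_quantile μ).prodMk (aemeasurable_quantile ν)

lemma lintegral_quantileCoupling {f : ℝ × ℝ → ℝ≥0∞} (hf : Measurable f) :
    ∫⁻ q, f q ∂quantileCoupling μ ν = ∫⁻ r in Ioo 0 1, f (quantile μ r, quantile ν r) :=
  lintegral_map' hf.aemeasurable (aemeasurable_quantile_prod μ ν)

instance : IsProbabilityMeasure (quantileCoupling μ ν) :=
  Measure.isProbabilityMeasure_map (aemeasurable_quantile_prod μ ν)

lemma map_fst_quantileCoupling [IsProbabilityMeasure μ] :
    (quantileCoupling μ ν).map Prod.fst = μ := by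
  rw [quantileCoupling, AEMeasurable.map_map_of_aemeasurable measurable_fst.aemeasurable
    (aemeasurable_quantile_prod μ ν)]
  exact map_quantile μ

lemma map_snd_quantileCoupling [IsProbabilityMeasure ν] :
    (quantileCoupling μ ν).map Prod.snd = ν := by
  rw [quantileCoupling, AEMeasurable.map_map_of_aemeasurable measurable_snd.aemeasurable
    (aemeasurable_quantile_prod μ ν)]
  exact map_quantile ν

end QuantileCoupling

def straddleSet (s t : ℝ) : Set (ℝ × ℝ) :=
  (Prod.snd ⁻¹' Iic s \ Prod.fst ⁻¹' Iic t) ∪ (Prod.fst ⁻¹' Iic s \ Prod.snd ⁻¹' Iic t)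

lemma measurableSet_straddleSet (s t : ℝ) : MeasurableSet (straddleSet s t) :=
  ((measurable_snd measurableSet_Iic).diff (measurable_fst measurableSet_Iic)).union
    ((measurable_fst measurableSet_Iic).diff (measurable_snd measurableSet_Iic))

lemma measurableSet_setOf_mem_straddleSet :
    MeasurableSet {z : (ℝ × ℝ) × ℝ × ℝ | z.1 ∈ straddleSet z.2.1 z.2.2} := by
  simp only [straddleSet, mem_union, Set.mem_sdiff, mem_preimage, mem_Iic]
  measurability

lemma quantileCoupling_straddleSet_le (μ ν : Measure ℝ) [IsProbabilityMeasure μ]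
    [IsProbabilityMeasure ν] (s t : ℝ) :
    quantileCoupling μ ν (straddleSet s t) ≤ (ν (Iic s) - μ (Iic t)) + (μ (Iic s) - ν (Iic t)) := by
  rw [quantileCoupling, Measure.map_apply_of_aemeasurable (aemeasurable_quantile_prod μ ν)
    (measurableSet_straddleSet s t), ← volume_restrict_Ioo_quantile_le_and_not_le μ ν,
    ← volume_restrict_Ioo_quantile_le_and_not_le ν μ]
  exact measure_union_le _ _

lemma tsub_add_tsub_le_measure_straddleSet (γ : Measure (ℝ × ℝ)) {s t : ℝ} (hst : s ≤ t) :
    (γ.map Prod.snd (Iic s) - γ.map Prod.fst (Iic t)) +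
        (γ.map Prod.fst (Iic s) - γ.map Prod.snd (Iic t)) ≤ γ (straddleSet s t) := by
  have hdisj : Disjoint (Prod.snd ⁻¹' Iic s \ Prod.fst ⁻¹' Iic t)
      (Prod.fst ⁻¹' Iic s \ Prod.snd ⁻¹' Iic t : Set (ℝ × ℝ)) :=
    disjoint_left.mpr fun q hq hq' => hq.2 (hq'.1.trans hst)
  simp only [Measure.map_apply measurable_fst measurableSet_Iic,
    Measure.map_apply measurable_snd measurableSet_Iic]
  rw [straddleSet, measure_union hdisj
    ((measurable_fst measurableSet_Iic).diff (measurable_snd measurableSet_Iic))]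
  exact add_le_add le_measure_sdiff le_measure_sdiff

lemma quantileCoupling_straddleSet_le_of_marginals {μ ν : Measure ℝ} [IsProbabilityMeasure μ]
    [IsProbabilityMeasure ν] {γ : Measure (ℝ × ℝ)} (hγ₁ : γ.map Prod.fst = μ)
    (hγ₂ : γ.map Prod.snd = ν) {s t : ℝ} (hst : s ≤ t) :
    quantileCoupling μ ν (straddleSet s t) ≤ γ (straddleSet s t) := by
  subst hγ₁ hγ₂
  exact (quantileCoupling_straddleSet_le _ _ s t).trans
    (tsub_add_tsub_le_measure_straddleSet γ hst)

lemma volume_triangle {a b : ℝ} (hab : a ≤ b) :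
    volume {p : ℝ × ℝ | a ≤ p.1 ∧ p.1 < p.2 ∧ p.2 < b} = ENNReal.ofReal ((b - a) ^ 2 / 2) := by
  have hregion : {p : ℝ × ℝ | a ≤ p.1 ∧ p.1 < p.2 ∧ p.2 < b} =
      regionBetween id (fun _ => b) (Icc a b) := by
    ext p
    simp only [regionBetween, mem_ofPred_eq, mem_Icc, mem_Ioo, id]
    constructor
    · rintro ⟨h1, h2, h3⟩; exact ⟨⟨h1, by linarith⟩, h2, h3⟩
    · rintro ⟨⟨h1, _⟩, h2, h3⟩; exact ⟨h1, h2, h3⟩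
  rw [hregion, Measure.volume_eq_prod, volume_regionBetween_eq_integral
    (f := id) continuous_id.integrableOn_Icc continuous_const.integrableOn_Icc measurableSet_Icc
    fun s hs => hs.2, integral_Icc_eq_integral_Ioc, ← intervalIntegral.integral_of_le hab]
  congr 1
  simp only [Pi.sub_apply, id]
  rw [intervalIntegral.integral_comp_sub_left (fun s => s), integral_id]
  ring

lemma volume_restrict_lt_setOf_mem_straddleSet (q : ℝ × ℝ) :
    volume.restrict {p : ℝ × ℝ | p.1 < p.2} {p | q ∈ straddleSet p.1 p.2} =
      ENNReal.ofReal ((q.1 - q.2) ^ 2 / 2) := by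
  have htri : {p : ℝ × ℝ | q ∈ straddleSet p.1 p.2} ∩ {p | p.1 < p.2} =
      {p | min q.1 q.2 ≤ p.1 ∧ p.1 < p.2 ∧ p.2 < max q.1 q.2} := by
    ext p
    simp only [straddleSet, mem_inter_iff, mem_union, Set.mem_sdiff, mem_preimage, mem_Iic,
      mem_ofPred_eq, min_le_iff, lt_max_iff]
    grind
  rw [Measure.restrict_apply' (measurableSet_lt measurable_fst measurable_snd), htri,
    volume_triangle min_le_max, max_sub_min_eq_abs, sq_abs, ← neg_sub, neg_sq]

lemma lintegral_sq_sub_eq (κ : Measure (ℝ × ℝ)) [SFinite κ] :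
    ∫⁻ q, ENNReal.ofReal ((q.1 - q.2) ^ 2) ∂κ =
      2 * ∫⁻ p in {p : ℝ × ℝ | p.1 < p.2}, κ (straddleSet p.1 p.2) := by
  have hslice (q : ℝ × ℝ) : ENNReal.ofReal ((q.1 - q.2) ^ 2) =
      2 * volume.restrict {p : ℝ × ℝ | p.1 < p.2} {p | q ∈ straddleSet p.1 p.2} := by
    rw [volume_restrict_lt_setOf_mem_straddleSet, ← ENNReal.ofReal_ofNat 2,
      ← ENNReal.ofReal_mul zero_le_two]
    ring_nf
  have hE := measurableSet_setOf_mem_straddleSet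
  calc ∫⁻ q, ENNReal.ofReal ((q.1 - q.2) ^ 2) ∂κ
      = ∫⁻ q, 2 * volume.restrict {p : ℝ × ℝ | p.1 < p.2} (Prod.mk q ⁻¹' _) ∂κ :=
        lintegral_congr hslice
    _ = 2 * (κ.prod (volume.restrict {p : ℝ × ℝ | p.1 < p.2})) _ := by
        rw [lintegral_const_mul' _ _ ENNReal.ofNat_ne_top, Measure.prod_apply hE]
    _ = 2 * ∫⁻ p in {p : ℝ × ℝ | p.1 < p.2}, κ (straddleSet p.1 p.2) := by
        rw [Measure.prod_apply_symm hE]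
        rfl

end QuantileCoupling

open QuantileCoupling in
theorem stmt19_general (μ ν : Measure ℝ) [IsProbabilityMeasure μ] [IsProbabilityMeasure ν]
    (Finv Ginv : ℝ → ℝ)
    (hF : ∀ r, Finv r = sInf {x : ℝ | r ≤ (μ (Set.Iic x)).toReal})
    (hG : ∀ r, Ginv r = sInf {x : ℝ | r ≤ (ν (Set.Iic x)).toReal}) :
    (⨅ γ ∈ {γ : Measure (ℝ × ℝ) |
        γ.map Prod.fst = μ ∧ γ.map Prod.snd = ν},
      ∫⁻ q, ENNReal.ofReal ((q.1 - q.2) ^ 2) ∂γ)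
      = ∫⁻ r in Set.Ioo (0 : ℝ) 1, ENNReal.ofReal ((Finv r - Ginv r) ^ 2) := by
  obtain rfl : Finv = quantile μ := funext fun r => by
    simp [hF, quantile, cdf_eq_real, measureReal_def]
  obtain rfl : Ginv = quantile ν := funext fun r => by
    simp [hG, quantile, cdf_eq_real, measureReal_def]
  have hsq : Measurable fun q : ℝ × ℝ => ENNReal.ofReal ((q.1 - q.2) ^ 2) := by fun_prop
  rw [← lintegral_quantileCoupling μ ν hsq]
  refine le_antisymm (iInf₂_le _ ⟨map_fst_quantileCoupling μ ν, map_snd_quantileCoupling μ ν⟩)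
    (le_iInf₂ fun γ ⟨hγ₁, hγ₂⟩ => ?_)
  have : IsProbabilityMeasure (γ.map Prod.fst) := hγ₁ ▸ inferInstance
  have : IsProbabilityMeasure γ := Measure.isProbabilityMeasure_of_map Prod.fst
  rw [lintegral_sq_sub_eq, lintegral_sq_sub_eq]
  gcongr 2 * ?_
  exact setLIntegral_mono' (measurableSet_lt measurable_fst measurable_snd) fun p hp =>
    quantileCoupling_straddleSet_le_of_marginals hγ₁ hγ₂ hp.le

theorem stmt19 (μ ν : Measure ℝ) [IsProbabilityMeasure μ] [IsProbabilityMeasure ν]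
    (hμ2 : Integrable (fun x => x ^ 2) μ) (hν2 : Integrable (fun x => x ^ 2) ν)
    (Finv Ginv : ℝ → ℝ)
    (hF : ∀ r, Finv r = sInf {x : ℝ | r ≤ (μ (Set.Iic x)).toReal})
    (hG : ∀ r, Ginv r = sInf {x : ℝ | r ≤ (ν (Set.Iic x)).toReal}) :
    (⨅ γ ∈ {γ : Measure (ℝ × ℝ) |
        γ.map Prod.fst = μ ∧ γ.map Prod.snd = ν},
      ∫⁻ q, ENNReal.ofReal ((q.1 - q.2) ^ 2) ∂γ)
      = ∫⁻ r in Set.Ioo (0 : ℝ) 1, ENNReal.ofReal ((Finv r - Ginv r) ^ 2) :=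
  stmt19_general μ ν Finv Ginv hF hG
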